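/- If v is locally bounded on G and dim H^∞_v(G) ≥ 2, then H^∞_v(G) separates the points of G: for any distinct z_1, z_2 ∈ G there exists f ∈ H^∞_v(G) with f(z_1) ≠ f(z_2). -/

import Mathlib

open Complex Metric Set Filter Topology MeasureTheory

noncomputable section

/-- `f` is holomorphic on `G` and `sup_{z in G} v z * |f z| < ∞`. -/
def MemHv (G : Set ℂ) (v : ℂ → ℝ) (f : ℂ → ℂ) : Prop :=
  DifferentiableOn ℂ f G ∧ ∃ C : ℝ, ∀ z ∈ G, v z * ‖f z‖ ≤ C

/-- The weighted sup-seminorm `‖f‖_v`. -/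
def HvNorm (G : Set ℂ) (v : ℂ → ℝ) (f : ℂ → ℂ) : ℝ :=
  sSup ((fun z => v z * ‖f z‖) '' G)

/-- A `‖·‖_v`-Cauchy sequence. -/
def HvCauchy (G : Set ℂ) (v : ℂ → ℝ) (F : ℕ → ℂ → ℂ) : Prop :=
  ∀ ε : ℝ, 0 < ε → ∃ N : ℕ, ∀ m ≥ N, ∀ n ≥ N, ∀ z ∈ G,
    v z * ‖F m z - F n z‖ ≤ ε

/-- Convergence in the `‖·‖_v`-seminorm. -/
def HvTendsto (G : Set ℂ) (v : ℂ → ℝ) (F : ℕ → ℂ → ℂ) (f : ℂ → ℂ) : Prop :=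
  ∀ ε : ℝ, 0 < ε → ∃ N : ℕ, ∀ n ≥ N, ∀ z ∈ G,
    v z * ‖F n z - f z‖ ≤ ε

/-- Completeness of `H^∞_v(G)`: every Cauchy sequence converges in the space. -/
def HvComplete (G : Set ℂ) (v : ℂ → ℝ) : Prop :=
  ∀ F : ℕ → ℂ → ℂ, (∀ n, MemHv G v (F n)) → HvCauchy G v F →
    ∃ f : ℂ → ℂ, MemHv G v f ∧ HvTendsto G v F f

/-- The seminorm `‖·‖_v` is a norm: `‖f‖_v = 0` forces `f = 0` on `G`. -/
def HvNormed (G : Set ℂ) (v : ℂ → ℝ) : Prop :=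
  ∀ f : ℂ → ℂ, MemHv G v f → (∀ z ∈ G, v z * ‖f z‖ = 0) →
    ∀ z ∈ G, f z = 0

/-- `H^∞_v(G)` is a Banach space. -/
def IsBanachHv (G : Set ℂ) (v : ℂ → ℝ) : Prop :=
  HvNormed G v ∧ HvComplete G v

/-! If `H^∞_v(G)` does not separate `z₁ ≠ z₂`, every `h` in it with `h z₁ = 0` vanishes on `G`:
the difference quotient `dslope h z₁` again lies in `H^∞_v(G)` (the weight is bounded near `z₁`),
so it takes the same value at `z₁` as at `z₂`, namely `(h z₂ - h z₁) / (z₂ - z₁) = 0`. Iterating,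
`h` vanishes to infinite order at `z₁`, hence on the domain `G`. Applied to `g(z₁) f - f(z₁) g` for
linearly independent `f, g`, this forces `f(z₁) = 0`, and then `f = 0`, a contradiction. -/

namespace MemHv

variable {G : Set ℂ} {v : ℂ → ℝ} {f g : ℂ → ℂ}

theorem const_mul (c : ℂ) (hf : MemHv G v f) : MemHv G v (fun z => c * f z) := by
  obtain ⟨C, hC⟩ := hf.2
  refine ⟨(differentiableOn_const c).mul hf.1, ‖c‖ * C, fun z hz => ?_⟩
  calc v z * ‖c * f z‖ = ‖c‖ * (v z * ‖f z‖) := by rw [norm_mul]; ring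
    _ ≤ ‖c‖ * C := mul_le_mul_of_nonneg_left (hC z hz) (norm_nonneg c)

theorem sub (hv : ∀ z ∈ G, 0 ≤ v z) (hf : MemHv G v f) (hg : MemHv G v g) :
    MemHv G v (fun z => f z - g z) := by
  obtain ⟨Cf, hCf⟩ := hf.2
  obtain ⟨Cg, hCg⟩ := hg.2
  refine ⟨hf.1.sub hg.1, Cf + Cg, fun z hz => ?_⟩
  calc v z * ‖f z - g z‖ ≤ v z * (‖f z‖ + ‖g z‖) :=
        mul_le_mul_of_nonneg_left (norm_sub_le _ _) (hv z hz)
    _ = v z * ‖f z‖ + v z * ‖g z‖ := mul_add _ _ _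
    _ ≤ Cf + Cg := add_le_add (hCf z hz) (hCg z hz)

/-- Near `z₀` the weight is bounded and `dslope h z₀` is continuous; away from `z₀` the
factor `1 / |z - z₀|` is bounded. -/
theorem dslope {z₀ : ℂ} (hG : G ∈ 𝓝 z₀) (hv : ∀ z ∈ G, 0 ≤ v z) {M : ℝ}
    (hM : ∀ᶠ z in 𝓝 z₀, v z ≤ M) {h : ℂ → ℂ} (hh : MemHv G v h) (h0 : h z₀ = 0) :
    MemHv G v (_root_.dslope h z₀) := by
  obtain ⟨r, hr, hball⟩ := Metric.mem_nhds_iff.1 (inter_mem hG hM)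
  have hsub : closedBall z₀ (r / 2) ⊆ G ∩ {z | v z ≤ M} :=
    (closedBall_subset_ball (by linarith)).trans hball
  have hd : DifferentiableOn ℂ (_root_.dslope h z₀) G := (differentiableOn_dslope hG).2 hh.1
  obtain ⟨K, hK⟩ := (isCompact_closedBall z₀ (r / 2)).exists_bound_of_continuousOn
    (hd.continuousOn.mono (hsub.trans inter_subset_left))
  obtain ⟨C, hC⟩ := hh.2
  have hC0 : 0 ≤ C := by simpa [h0] using hC z₀ (mem_of_mem_nhds hG)
  refine ⟨hd, max (M * K) (C / (r / 2)), fun z hz => ?_⟩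
  rcases le_or_gt (dist z z₀) (r / 2) with hnear | hfar
  · have hvM : v z ≤ M := (hsub hnear).2
    calc v z * ‖_root_.dslope h z₀ z‖ ≤ M * K :=
          mul_le_mul hvM (hK z hnear) (norm_nonneg _) ((hv z hz).trans hvM)
      _ ≤ _ := le_max_left _ _
  · have hne : z ≠ z₀ := dist_pos.1 ((half_pos hr).trans hfar)
    rw [dist_eq] at hfar
    rw [dslope_of_ne _ hne, slope_def_field, h0, sub_zero, norm_div, mul_div_assoc']
    exact (div_le_div₀ hC0 (hC z hz) (by positivity) hfar.le).trans (le_max_right _ _)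

theorem iterate_dslope {z₁ z₂ : ℂ} (hG : G ∈ 𝓝 z₁) (hv : ∀ z ∈ G, 0 ≤ v z) {M : ℝ}
    (hM : ∀ᶠ z in 𝓝 z₁, v z ≤ M) (hne : z₂ ≠ z₁) (hsep : ∀ p, MemHv G v p → p z₁ = p z₂)
    {h : ℂ → ℂ} (hh : MemHv G v h) (h0 : h z₁ = 0) (n : ℕ) :
    MemHv G v ((Function.swap _root_.dslope z₁)^[n] h) ∧
      (Function.swap _root_.dslope z₁)^[n] h z₁ = 0 := by
  induction n with
  | zero => exact ⟨hh, h0⟩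
  | succ n ih =>
    obtain ⟨hmem, hzero⟩ := ih
    rw [Function.iterate_succ_apply']
    have hd := hmem.dslope hG hv hM hzero
    refine ⟨hd, ?_⟩
    rw [Function.swap, hsep _ hd, dslope_of_ne _ hne, slope_def_field, ← hsep _ hmem, hzero,
      sub_self, zero_div]

theorem eqOn_zero_of_forall_apply_eq {z₁ z₂ : ℂ} (hG : IsOpen G) (hGc : IsPreconnected G)
    (hz₁ : z₁ ∈ G) (hv : ∀ z ∈ G, 0 ≤ v z) {M : ℝ} (hM : ∀ᶠ z in 𝓝 z₁, v z ≤ M)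
    (hne : z₂ ≠ z₁) (hsep : ∀ p, MemHv G v p → p z₁ = p z₂) {h : ℂ → ℂ} (hh : MemHv G v h)
    (h0 : h z₁ = 0) : EqOn h 0 G := by
  obtain ⟨p, hp⟩ := hh.1.analyticAt (hG.mem_nhds hz₁)
  by_cases hp0 : p = 0
  · subst hp0
    exact (hh.1.analyticOnNhd hG).eqOn_zero_of_preconnected_of_eventuallyEq_zero hGc hz₁
      (hp.locally_zero_iff.2 rfl)
  · exact absurd (hh.iterate_dslope (hG.mem_nhds hz₁) hv hM hne hsep h0 p.order).2
      (hp.iterate_dslope_fslope_ne_zero hp0)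

end MemHv

theorem stmt8 (G : Set ℂ) (v : ℂ → ℝ) (hG : IsOpen G) (hGc : IsConnected G)
    (hv : ∀ z ∈ G, 0 ≤ v z)
    (hlb : ∀ z ∈ G, ∃ r > (0:ℝ), Metric.ball z r ⊆ G ∧
      ∃ M : ℝ, ∀ ζ ∈ Metric.ball z r, v ζ ≤ M)
    (hdim : ∃ f g : ℂ → ℂ, MemHv G v f ∧ MemHv G v g ∧
      ∀ a b : ℂ, (∀ z ∈ G, a * f z + b * g z = 0) → a = 0 ∧ b = 0) :
    ∀ z1 ∈ G, ∀ z2 ∈ G, z1 ≠ z2 → ∃ f : ℂ → ℂ, MemHv G v f ∧ f z1 ≠ f z2 := by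
  intro z₁ hz₁ z₂ _ hne
  by_contra! hsep
  obtain ⟨f, g, hf, hg, hind⟩ := hdim
  obtain ⟨r, hr, -, M, hM⟩ := hlb z₁ hz₁
  have hzero : ∀ h, MemHv G v h → h z₁ = 0 → EqOn h 0 G := fun h hh h0 =>
    hh.eqOn_zero_of_forall_apply_eq hG hGc.isPreconnected hz₁ hv
      (eventually_of_mem (ball_mem_nhds z₁ hr) hM) hne.symm hsep h0
  have hF := hzero _ ((hf.const_mul (g z₁)).sub hv (hg.const_mul (f z₁))) (by ring)
  have hf₁ : f z₁ = 0 := by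
    simpa using (hind (g z₁) (-f z₁) fun z hz => by simpa [sub_eq_add_neg] using hF hz).2
  exact one_ne_zero (hind 1 0 fun z hz => by simp [hzero f hf hf₁ hz]).1
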